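/- Consider a finite list whose positions are each colored red, blue, or black such that: (1) no red element is immediately above a blue element; (2) there is no black element j whose immediate successor is blue and for which B(j) ≤ R(j); and (3) there is no black element j whose immediate predecessor is red and for which R(j) < B(j). Here B(j) is the number of blue elements below j and R(j) is the number of red elements above j in the list. Then no red element is above any blue element in the list. -/
import Mathlib


/-- The three colors. -/
inductive Col : Type
  | red
  | blue
  | black
deriving DecidableEq

/-- Since only the colors of the entries matter here, the list is represented
as a list of colors.  `colAt l i` is the color at position `i`. -/
def colAt (l : List Col) (i : ℕ) : Col := l.getD i Col.black

/-- `Bpos l i` is the number of blue elements below (after) position `i`. -/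
def Bpos (l : List Col) (i : ℕ) : ℕ :=
  ((l.drop (i + 1)).filter (fun c => decide (c = Col.blue))).length

/-- `Rpos l i` is the number of red elements above (before) position `i`. -/
def Rpos (l : List Col) (i : ℕ) : ℕ :=
  ((l.take i).filter (fun c => decide (c = Col.red))).length


lemma Bpos_step (l : List Col) (k : ℕ) (hk : k + 1 < l.length)
    (hb : colAt l (k+1) = Col.black) : Bpos l k = Bpos l (k+1) := by
  have h := List.drop_eq_getElem_cons hk
  have hg : l[k+1] = Col.black := by
    simpa [colAt, List.getD_eq_getElem?_getD, List.getElem?_eq_getElem hk] using hb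
  simp [Bpos, h, hg]

lemma Rpos_step (l : List Col) (k : ℕ) (hk : k < l.length)
    (hb : colAt l k = Col.black) : Rpos l k = Rpos l (k+1) := by
  have hg : l[k] = Col.black := by
    simpa [colAt, List.getD_eq_getElem?_getD, List.getElem?_eq_getElem hk] using hb
  simp [Rpos, List.take_succ, List.getElem?_eq_getElem hk, hg]

lemma Bpos_const (l : List Col) (a b : ℕ) (hab : a ≤ b) (hb : b < l.length)
    (hblack : ∀ k, a < k → k ≤ b → colAt l k = Col.black) :
    Bpos l a = Bpos l b := by
  induction b, hab using Nat.le_induction with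
  | base => rfl
  | succ b hab ih =>
    rw [ih (by omega) (fun k h1 h2 => hblack k h1 (by omega)),
      Bpos_step l b hb (hblack (b+1) (by omega) le_rfl)]

lemma Rpos_const (l : List Col) (a b : ℕ) (hab : a ≤ b) (hb : b ≤ l.length)
    (hblack : ∀ k, a ≤ k → k < b → colAt l k = Col.black) :
    Rpos l a = Rpos l b := by
  induction b, hab using Nat.le_induction with
  | base => rfl
  | succ b hab ih =>
    rw [ih (by omega) (fun k h1 h2 => hblack k h1 (by omega)),
      Rpos_step l b (by omega) (hblack b (by omega) (by omega))]

/-- if (1) no red element is immediately above a blue element,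
(2) there is no black element whose immediate successor is blue and with
`B(j) ≤ R(j)`, and (3) there is no black element whose immediate predecessor is
red and with `R(j) < B(j)`, then no red element is above any blue element. -/
theorem no_red_above_blue_of_no_rule_applies (l : List Col)
    (h1 : ∀ i, i + 1 < l.length →
      ¬(colAt l i = Col.red ∧ colAt l (i + 1) = Col.blue))
    (h2 : ∀ i, i + 1 < l.length → colAt l i = Col.black →
      colAt l (i + 1) = Col.blue → ¬(Bpos l i ≤ Rpos l i))
    (h3 : ∀ i, 0 < i → i < l.length → colAt l i = Col.black →
      colAt l (i - 1) = Col.red → ¬(Rpos l i < Bpos l i)) :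
    ∀ i j, i < j → j < l.length →
      ¬(colAt l i = Col.red ∧ colAt l j = Col.blue) := by
  have key : ∀ n i j, j - i = n → i < j → j < l.length →
      colAt l i = Col.red → colAt l j = Col.blue → False := by
    intro n
    induction n using Nat.strong_induction_on with
    | _ n IH =>
      intro i j hn hij hj hr hb
      rcases Nat.lt_or_ge (i+1) j with hij2 | hij2
      · -- at least one element strictly between i and j
        have allblack : ∀ k, i < k → k < j → colAt l k = Col.black := by
          intro k hik hkj
          cases hc : colAt l k with
          | red => exact absurd (IH (j - k) (by omega) k j rfl hkj hj hc hb) not_false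
          | blue => exact absurd (IH (k - i) (by omega) i k rfl hik (by omega) hr hc) not_false
          | black => rfl
        have hA := h3 (i+1) (by omega) (by omega) (allblack (i+1) (by omega) hij2)
          (by simpa using hr)
        have hB := h2 (j-1) (by omega) (allblack (j-1) (by omega) (by omega))
          (by rw [Nat.sub_add_cancel (by omega : 1 ≤ j)]; exact hb)
        have hBeq : Bpos l (i+1) = Bpos l (j-1) :=
          Bpos_const l (i+1) (j-1) (by omega) (by omega)
            (fun k h1 h2 => allblack k (by omega) (by omega))
        have hReq : Rpos l (i+1) = Rpos l (j-1) :=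
          Rpos_const l (i+1) (j-1) (by omega) (by omega)
            (fun k h1 h2 => allblack k (by omega) (by omega))
        omega
      · -- j = i + 1
        have : j = i + 1 := by omega
        subst this
        exact h1 i hj ⟨hr, hb⟩
  intro i j hij hj ⟨hr, hb⟩
  exact key (j - i) i j rfl hij hj hr hb
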